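/- Suppose the dangling correction holds. Then the stochastic solution of MPR x = α P x^{k-1} + (1−α)v is unique if and only if the nonnegative solution of MLPPR (e^Ty)^{k-2}y − αP̄y^{k-1} = v is unique. -/

import Mathlib

/-!
On the simplex the dangling correction turns MPR into `x - α P̄ x^(k-1) = (1 - α eᵀ P̄ x^(k-1)) v`.
Hence an MPR solution `x`, scaled by `t > 0` with `t^(k-1) (1 - α eᵀ P̄ x^(k-1)) = 1`, solves MLPPR,
and an MLPPR solution `y` (for which `eᵀ y > 0`, as `eᵀ v = 1`) normalizes to an MPR solution.
Summing the MLPPR equation gives `(eᵀ y)^(k-1) - α eᵀ P̄ y^(k-1) = 1`, homogeneous of degree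
`k - 1` in `y`, so the only positive multiple of an MLPPR solution that is again one is itself;
the two maps therefore transport uniqueness in both directions.
-/

open Finset Real

noncomputable def contr {n m : ℕ} (P : Fin n → (Fin m → Fin n) → ℝ) (y : Fin n → ℝ) : Fin n → ℝ :=
  fun i => ∑ j : Fin m → Fin n, P i j * ∏ s, y (j s)

section Contraction

variable {n m : ℕ}

lemma contr_nonneg {P : Fin n → (Fin m → Fin n) → ℝ} {y : Fin n → ℝ}
    (hP : ∀ i j, 0 ≤ P i j) (hy : ∀ i, 0 ≤ y i) (i : Fin n) : 0 ≤ contr P y i :=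
  sum_nonneg fun j _ => mul_nonneg (hP i j) (prod_nonneg fun _ _ => hy _)

lemma contr_smul (P : Fin n → (Fin m → Fin n) → ℝ) (c : ℝ) (y : Fin n → ℝ) :
    contr P (c • y) = c ^ m • contr P y := by
  funext i
  simp only [contr, Pi.smul_apply, smul_eq_mul, prod_mul_distrib, prod_const, card_univ,
    Fintype.card_fin, mul_sum]
  exact sum_congr rfl fun j _ => by ring

lemma contr_zero (P : Fin n → (Fin m → Fin n) → ℝ) (hm : m ≠ 0) : contr P 0 = 0 := by
  simpa [zero_pow hm] using contr_smul P 0 0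

lemma sum_contr (P : Fin n → (Fin m → Fin n) → ℝ) (y : Fin n → ℝ) :
    ∑ i, contr P y i = ∑ j : Fin m → Fin n, (∑ i, P i j) * ∏ s, y (j s) := by
  simp only [contr, sum_mul]
  exact sum_comm

lemma sum_prod_eq_sum_pow (y : Fin n → ℝ) :
    ∑ j : Fin m → Fin n, ∏ s, y (j s) = (∑ i, y i) ^ m := by
  rw [sum_pow', Fintype.piFinset_univ]

lemma sum_contr_le_sum_pow {P : Fin n → (Fin m → Fin n) → ℝ} {y : Fin n → ℝ}
    (hP : ∀ j, ∑ i, P i j ≤ 1) (hy : ∀ i, 0 ≤ y i) :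
    ∑ i, contr P y i ≤ (∑ i, y i) ^ m := by
  rw [sum_contr, ← sum_prod_eq_sum_pow]
  exact sum_le_sum fun j _ =>
    mul_le_of_le_one_left (prod_nonneg fun _ _ => hy _) (hP j)

lemma contr_dangling {Pb P : Fin n → (Fin m → Fin n) → ℝ} {v : Fin n → ℝ}
    (hP : ∀ i j, P i j = Pb i j + v i * (1 - ∑ l, Pb l j)) (y : Fin n → ℝ) (i : Fin n) :
    contr P y i = contr Pb y i + v i * ((∑ l, y l) ^ m - ∑ l, contr Pb y l) := by
  rw [sum_contr, ← sum_prod_eq_sum_pow, ← sum_sub_distrib, mul_sum, contr, contr,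
    ← sum_add_distrib]
  exact sum_congr rfl fun j _ => by rw [hP]; ring

end Contraction

def IsMPRSolution {n m : ℕ} (α : ℝ) (P : Fin n → (Fin m → Fin n) → ℝ) (v x : Fin n → ℝ) :
    Prop :=
  (∀ i, 0 ≤ x i) ∧ ∑ i, x i = 1 ∧ ∀ i, x i = α * contr P x i + (1 - α) * v i

/-- The MLPPR equation for tensors of order `k = d + 2`. -/
def IsMLPPRSolution {n d : ℕ} (α : ℝ) (Pb : Fin n → (Fin (d + 1) → Fin n) → ℝ)
    (v y : Fin n → ℝ) : Prop :=
  (∀ i, 0 ≤ y i) ∧ ∀ i, (∑ l, y l) ^ d * y i - α * contr Pb y i = v i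

section Solutions

variable {n : ℕ} {α : ℝ} {v : Fin n → ℝ}

lemma isMPRSolution_iff {m : ℕ} {Pb P : Fin n → (Fin m → Fin n) → ℝ}
    (hP : ∀ i j, P i j = Pb i j + v i * (1 - ∑ l, Pb l j)) (x : Fin n → ℝ) :
    IsMPRSolution α P v x ↔ (∀ i, 0 ≤ x i) ∧ ∑ i, x i = 1 ∧
      ∀ i, x i - α * contr Pb x i = (1 - α * ∑ l, contr Pb x l) * v i := by
  refine and_congr_right fun _ => and_congr_right fun hx => forall_congr' fun i => ?_
  rw [contr_dangling hP, hx, one_pow]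
  constructor <;> intro h <;> linear_combination h

variable {d : ℕ} {Pb P : Fin n → (Fin (d + 1) → Fin n) → ℝ} {y : Fin n → ℝ}

lemma IsMLPPRSolution.sum_eq (hy : IsMLPPRSolution α Pb v y) :
    (∑ l, y l) ^ (d + 1) - α * ∑ l, contr Pb y l = ∑ i, v i := by
  rw [← sum_congr rfl fun i _ => hy.2 i, sum_sub_distrib, ← mul_sum, ← mul_sum, pow_succ]

lemma IsMLPPRSolution.sum_pos (hy : IsMLPPRSolution α Pb v y) (hv : ∑ i, v i ≠ 0) :
    0 < ∑ l, y l := by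
  refine (sum_nonneg fun l _ => hy.1 l).lt_of_ne fun hσ => hv ?_
  have hy0 : y = 0 := funext fun i =>
    (sum_eq_zero_iff_of_nonneg fun l _ => hy.1 l).1 hσ.symm i (mem_univ i)
  rw [← hy.sum_eq, ← hσ, hy0, contr_zero Pb d.succ_ne_zero]
  simp

lemma IsMLPPRSolution.eq_one_of_smul {c : ℝ} (hy : IsMLPPRSolution α Pb v y)
    (hcy : IsMLPPRSolution α Pb v (c • y)) (hc : 0 ≤ c) (hv : ∑ i, v i ≠ 0) : c = 1 := by
  have hscaled := hcy.sum_eq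
  simp only [contr_smul, Pi.smul_apply, smul_eq_mul, ← mul_sum, mul_pow] at hscaled
  have hpow : c ^ (d + 1) = 1 := by
    apply mul_right_cancel₀ hv
    linear_combination hscaled - c ^ (d + 1) * hy.sum_eq
  exact (pow_eq_one_iff_of_nonneg hc d.succ_ne_zero).1 hpow

lemma IsMLPPRSolution.isMPRSolution_inv_sum_smul (hy : IsMLPPRSolution α Pb v y)
    (hP : ∀ i j, P i j = Pb i j + v i * (1 - ∑ l, Pb l j)) (hv : ∑ i, v i = 1) :
    IsMPRSolution α P v ((∑ l, y l)⁻¹ • y) := by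
  have hσ : 0 < ∑ l, y l := hy.sum_pos (by simp [hv])
  set σ := ∑ l, y l
  have hcancel : σ⁻¹ ^ (d + 1) * σ ^ (d + 1) = 1 := by
    rw [← mul_pow, inv_mul_cancel₀ hσ.ne', one_pow]
  have hcancel' : σ⁻¹ ^ (d + 1) * σ ^ d = σ⁻¹ := by
    rw [pow_succ, mul_right_comm, ← mul_pow, inv_mul_cancel₀ hσ.ne', one_pow, one_mul]
  rw [isMPRSolution_iff hP]
  simp only [contr_smul, Pi.smul_apply, smul_eq_mul, ← mul_sum]
  refine ⟨fun i => mul_nonneg (inv_nonneg.2 hσ.le) (hy.1 i), inv_mul_cancel₀ hσ.ne',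
    fun i => ?_⟩
  linear_combination σ⁻¹ ^ (d + 1) * hy.2 i - y i * hcancel' + v i * hcancel
    - v i * σ⁻¹ ^ (d + 1) * (hy.sum_eq + hv)

lemma IsMPRSolution.exists_smul_isMLPPRSolution {x : Fin n → ℝ} (hx : IsMPRSolution α P v x)
    (hPb0 : ∀ i j, 0 ≤ Pb i j) (hPbs : ∀ j, ∑ i, Pb i j ≤ 1)
    (hP : ∀ i j, P i j = Pb i j + v i * (1 - ∑ l, Pb l j)) (hα0 : 0 ≤ α) (hα1 : α < 1) :
    ∃ t : ℝ, 0 < t ∧ IsMLPPRSolution α Pb v (t • x) := by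
  obtain ⟨hx0, hx1, hxeq⟩ := (isMPRSolution_iff hP x).1 hx
  set S := ∑ l, contr Pb x l
  have hS0 : 0 ≤ S := sum_nonneg fun l _ => contr_nonneg hPb0 hx0 l
  have hS1 : S ≤ 1 := by simpa [hx1] using sum_contr_le_sum_pow hPbs hx0
  have hpos : 0 < 1 - α * S := by nlinarith
  set t : ℝ := (1 - α * S)⁻¹ ^ (((d + 1 : ℕ) : ℝ)⁻¹)
  have htpos : 0 < t := rpow_pos_of_pos (inv_pos.2 hpos) _
  have ht : t ^ (d + 1) * (1 - α * S) = 1 := by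
    rw [rpow_inv_natCast_pow (inv_pos.2 hpos).le d.succ_ne_zero, inv_mul_cancel₀ hpos.ne']
  refine ⟨t, htpos, fun i => mul_nonneg htpos.le (hx0 i), fun i => ?_⟩
  simp only [contr_smul, Pi.smul_apply, smul_eq_mul, ← mul_sum, hx1]
  linear_combination t ^ (d + 1) * hxeq i + v i * ht

end Solutions

theorem mpr_unique_iff_mlppr_unique_general (n k : ℕ) (hk : 2 ≤ k)
    (Pb P : Fin n → (Fin (k-1) → Fin n) → ℝ)
    (hPb0 : ∀ i j, 0 ≤ Pb i j) (hPbs : ∀ j, ∑ i, Pb i j ≤ 1)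
    (v : Fin n → ℝ) (hv1 : ∑ i, v i = 1)
    (hP : ∀ i j, P i j = Pb i j + v i * (1 - ∑ l, Pb l j))
    (α : ℝ) (hα0 : 0 ≤ α) (hα1 : α < 1) :
    (∃! x : Fin n → ℝ, (∀ i, 0 ≤ x i) ∧ ∑ i, x i = 1 ∧
        ∀ i, x i = α * contr P x i + (1-α) * v i) ↔
    (∃! y : Fin n → ℝ, (∀ i, 0 ≤ y i) ∧
        ∀ i, (∑ l, y l) ^ (k-2) * y i - α * contr Pb y i = v i) := by
  obtain ⟨d, rfl⟩ : ∃ d, k = d + 2 := ⟨k - 2, by omega⟩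
  show (∃! x, IsMPRSolution α P v x) ↔ ∃! y, IsMLPPRSolution (d := d) α Pb v y
  have hv : ∑ i, v i ≠ 0 := by simp [hv1]
  constructor
  · rintro ⟨x₀, hx₀, hx₀_unique⟩
    obtain ⟨t, ht, hy₀⟩ := hx₀.exists_smul_isMLPPRSolution hPb0 hPbs hP hα0 hα1
    refine ⟨t • x₀, hy₀, fun y hy => ?_⟩
    have hσ := hy.sum_pos hv
    have hx : (∑ l, y l)⁻¹ • y = x₀ := hx₀_unique _ (hy.isMPRSolution_inv_sum_smul hP hv1)
    obtain ⟨c, hc, rfl⟩ : ∃ c, 0 ≤ c ∧ y = c • t • x₀ := ⟨(∑ l, y l) / t, by positivity, by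
      rw [smul_smul, div_mul_cancel₀ _ ht.ne', ← hx, smul_inv_smul₀ hσ.ne']⟩
    rw [hy₀.eq_one_of_smul hy hc hv, one_smul]
  · rintro ⟨y₀, hy₀, hy₀_unique⟩
    refine ⟨(∑ l, y₀ l)⁻¹ • y₀, hy₀.isMPRSolution_inv_sum_smul hP hv1, fun x hx => ?_⟩
    obtain ⟨t, ht, hy⟩ := hx.exists_smul_isMLPPRSolution hPb0 hPbs hP hα0 hα1
    rw [← hy₀_unique _ hy]
    simp only [Pi.smul_apply, smul_eq_mul, ← mul_sum, hx.2.1, mul_one, inv_smul_smul₀ ht.ne']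

theorem mpr_unique_iff_mlppr_unique (n k : ℕ) (hn : 0 < n) (hk : 2 ≤ k)
    (Pb P : Fin n → (Fin (k-1) → Fin n) → ℝ)
    (hPb0 : ∀ i j, 0 ≤ Pb i j) (hPbs : ∀ j, ∑ i, Pb i j ≤ 1)
    (v : Fin n → ℝ) (hv0 : ∀ i, 0 ≤ v i) (hv1 : ∑ i, v i = 1)
    (hP : ∀ i j, P i j = Pb i j + v i * (1 - ∑ l, Pb l j))
    (α : ℝ) (hα0 : 0 ≤ α) (hα1 : α < 1) :
    (∃! x : Fin n → ℝ, (∀ i, 0 ≤ x i) ∧ ∑ i, x i = 1 ∧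
        ∀ i, x i = α * contr P x i + (1-α) * v i) ↔
    (∃! y : Fin n → ℝ, (∀ i, 0 ≤ y i) ∧
        ∀ i, (∑ l, y l) ^ (k-2) * y i - α * contr Pb y i = v i) :=
  mpr_unique_iff_mlppr_unique_general n k hk Pb P hPb0 hPbs v hv1 hP α hα0 hα1
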